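/- Let π and σ be representations of Whittaker type of GL_n(F) and GL_m(F), respectively. Let π̂ denote the representation of GL_n(F) on the space of π given by π̂(g) = π(ᵗg⁻¹) (isomorphic to the contragredient of π), and likewise σ̂. Then Γ(π × σ, ψ) = Γ(σ̂ × π̂, ψ⁻¹). -/

import Mathlib

/-!
Common setup: representations of `GL_n` over a finite field `F`, Whittaker vectors,
parabolic induction, the intertwining operator and the Shahidi gamma factor,
Bessel functions, and various auxiliary matrices.
-/

open Matrix
open scoped TensorProduct Classical

noncomputable section

namespace GammaFF

variable (F : Type) [Field F] [Fintype F] [DecidableEq F]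

/-- The sum `M 0 1 + M 1 2 + ⋯` of the superdiagonal entries of a square matrix. -/
def supDiag {k : ℕ} (M : Matrix (Fin k) (Fin k) F) : F :=
  ∑ i : Fin k, ∑ j : Fin k, if (j : ℕ) = (i : ℕ) + 1 then M i j else 0

/-- `u ∈ GL_k(F)` is an upper triangular unipotent matrix. -/
def IsUnip {k : ℕ} (u : GL (Fin k) F) : Prop :=
  (∀ i : Fin k, (u : Matrix (Fin k) (Fin k) F) i i = 1) ∧
  ∀ i j : Fin k, (j : ℕ) < (i : ℕ) → (u : Matrix (Fin k) (Fin k) F) i j = 0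

variable {F}

/-- The value at `u` of the extension `ψ(u) = ψ(u_{1,2} + u_{2,3} + ⋯ + u_{k-1,k})`
of the additive character `ψ` to the subgroup `U_k` of upper triangular unipotent
matrices. -/
def psiU {k : ℕ} (ψ : AddChar F ℂ) (u : GL (Fin k) F) : ℂ :=
  ψ (supDiag F (u : Matrix (Fin k) (Fin k) F))

variable {V W : Type} [AddCommGroup V] [Module ℂ V] [AddCommGroup W] [Module ℂ W]

/-- `v` is a `ψ`-Whittaker vector of the representation `π` of `GL_n(F)`:
`π(u) v = ψ(u) v` for all upper triangular unipotent `u`. -/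
def IsWhittakerVector {n : ℕ} (π : Representation ℂ (GL (Fin n) F) V) (ψ : AddChar F ℂ)
    (v : V) : Prop :=
  ∀ u : GL (Fin n) F, IsUnip F u → π u v = psiU ψ u • v

/-- `π` is generic: it has a nonzero `ψ`-Whittaker vector. -/
def IsGeneric {n : ℕ} (π : Representation ℂ (GL (Fin n) F) V) (ψ : AddChar F ℂ) : Prop :=
  ∃ v : V, v ≠ 0 ∧ IsWhittakerVector π ψ v

/-- `π` is of Whittaker type: its `ψ`-Whittaker vectors span a one-dimensional
subspace. -/
def WhittakerType {n : ℕ} (π : Representation ℂ (GL (Fin n) F) V) (ψ : AddChar F ℂ) : Prop :=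
  ∃ v : V, v ≠ 0 ∧ IsWhittakerVector π ψ v ∧
    ∀ w : V, IsWhittakerVector π ψ w → ∃ c : ℂ, w = c • v

/-- Isomorphism of two representations of a group `G`. -/
def RepIso {G : Type} [Group G] (π : Representation ℂ G V) (τ : Representation ℂ G W) : Prop :=
  ∃ φ : V ≃ₗ[ℂ] W, ∀ g v, φ (π g v) = τ g (φ v)

/-- `π` is (isomorphic to) a subrepresentation of `τ`. -/
def IsSubrep {G : Type} [Group G] (π : Representation ℂ G V) (τ : Representation ℂ G W) : Prop :=
  ∃ φ : V →ₗ[ℂ] W, Function.Injective φ ∧ ∀ g v, φ (π g v) = τ g (φ v)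

/-- `π` is an irreducible representation. -/
def IsIrreducibleRep {G : Type} [Group G] (π : Representation ℂ G V) : Prop :=
  Nontrivial V ∧ ∀ U : Submodule ℂ V, (∀ g, ∀ v ∈ U, π g v ∈ U) → U = ⊥ ∨ U = ⊤

/-- The order preserving identification of `Fin a ⊕ Fin b` with `Fin k` when `a + b = k`. -/
def blockEquiv {a b k : ℕ} (h : a + b = k) : Fin a ⊕ Fin b ≃ Fin k :=
  finSumFinEquiv.trans (finCongr h)

variable (F)

/-- The `k × k` block matrix `(A B; C D)` with diagonal blocks of sizes `a`, `b`,
`a + b = k`. -/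
def bmat {a b k : ℕ} (h : a + b = k) (A : Matrix (Fin a) (Fin a) F) (B : Matrix (Fin a) (Fin b) F)
    (C : Matrix (Fin b) (Fin a) F) (D : Matrix (Fin b) (Fin b) F) : Matrix (Fin k) (Fin k) F :=
  (Matrix.fromBlocks A B C D).submatrix (blockEquiv h).symm (blockEquiv h).symm

lemma bmat_mul {a b k : ℕ} (h : a + b = k) (A A' : Matrix (Fin a) (Fin a) F)
    (B B' : Matrix (Fin a) (Fin b) F) (C C' : Matrix (Fin b) (Fin a) F)
    (D D' : Matrix (Fin b) (Fin b) F) :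
    bmat F h A B C D * bmat F h A' B' C' D' =
      bmat F h (A * A' + B * C') (A * B' + B * D') (C * A' + D * C') (C * B' + D * D') := by
  unfold bmat
  rw [Matrix.submatrix_mul_equiv _ _ _ ((blockEquiv h).symm) _, Matrix.fromBlocks_multiply]

lemma bmat_one {a b k : ℕ} (h : a + b = k) :
    bmat F h (1 : Matrix (Fin a) (Fin a) F) 0 0 (1 : Matrix (Fin b) (Fin b) F) = 1 := by
  unfold bmat
  rw [Matrix.fromBlocks_one, Matrix.submatrix_one_equiv]

/-- The element `(A B; 0 D)` of the standard parabolic subgroup `P_{a,b} ≤ GL_k(F)`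
(`a + b = k`), where `A ∈ GL_a(F)`, `D ∈ GL_b(F)`, and `B` is an arbitrary `a × b`
matrix.  Every element of `P_{a,b}` has this form. -/
def pElt {a b k : ℕ} (h : a + b = k) (A : GL (Fin a) F) (B : Matrix (Fin a) (Fin b) F)
    (D : GL (Fin b) F) : GL (Fin k) F where
  val := bmat F h (A : Matrix (Fin a) (Fin a) F) B 0 (D : Matrix (Fin b) (Fin b) F)
  inv := bmat F h ((A⁻¹ : GL (Fin a) F) : Matrix (Fin a) (Fin a) F)
    (-(((A⁻¹ : GL (Fin a) F) : Matrix (Fin a) (Fin a) F) * B *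
       ((D⁻¹ : GL (Fin b) F) : Matrix (Fin b) (Fin b) F))) 0
    ((D⁻¹ : GL (Fin b) F) : Matrix (Fin b) (Fin b) F)
  val_inv := by
    rw [bmat_mul]
    have h1 : (A : Matrix (Fin a) (Fin a) F) * ((A⁻¹ : GL (Fin a) F) : Matrix (Fin a) (Fin a) F)
        + B * (0 : Matrix (Fin b) (Fin a) F) = 1 := by
      rw [Matrix.mul_zero, add_zero]; exact Units.mul_inv A
    have h2 : (A : Matrix (Fin a) (Fin a) F) *
        -(((A⁻¹ : GL (Fin a) F) : Matrix (Fin a) (Fin a) F) * B *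
          ((D⁻¹ : GL (Fin b) F) : Matrix (Fin b) (Fin b) F)) +
        B * ((D⁻¹ : GL (Fin b) F) : Matrix (Fin b) (Fin b) F) = 0 := by
      rw [Matrix.mul_neg, ← Matrix.mul_assoc, ← Matrix.mul_assoc, Units.mul_inv,
        Matrix.one_mul, neg_add_cancel]
    have h3 : (0 : Matrix (Fin b) (Fin a) F) * ((A⁻¹ : GL (Fin a) F) : Matrix (Fin a) (Fin a) F)
        + (D : Matrix (Fin b) (Fin b) F) * (0 : Matrix (Fin b) (Fin a) F) = 0 := by
      simp
    have h4 : (0 : Matrix (Fin b) (Fin a) F) *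
        -(((A⁻¹ : GL (Fin a) F) : Matrix (Fin a) (Fin a) F) * B *
          ((D⁻¹ : GL (Fin b) F) : Matrix (Fin b) (Fin b) F)) +
        (D : Matrix (Fin b) (Fin b) F) * ((D⁻¹ : GL (Fin b) F) : Matrix (Fin b) (Fin b) F) = 1 := by
      rw [Matrix.zero_mul, zero_add]; exact Units.mul_inv D
    rw [h1, h2, h3, h4, bmat_one]
  inv_val := by
    rw [bmat_mul]
    have h1 : ((A⁻¹ : GL (Fin a) F) : Matrix (Fin a) (Fin a) F) * (A : Matrix (Fin a) (Fin a) F)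
        + -(((A⁻¹ : GL (Fin a) F) : Matrix (Fin a) (Fin a) F) * B *
          ((D⁻¹ : GL (Fin b) F) : Matrix (Fin b) (Fin b) F)) * (0 : Matrix (Fin b) (Fin a) F) = 1 := by
      rw [Matrix.mul_zero, add_zero]; exact Units.inv_mul A
    have h2 : ((A⁻¹ : GL (Fin a) F) : Matrix (Fin a) (Fin a) F) * B +
        -(((A⁻¹ : GL (Fin a) F) : Matrix (Fin a) (Fin a) F) * B *
          ((D⁻¹ : GL (Fin b) F) : Matrix (Fin b) (Fin b) F)) * (D : Matrix (Fin b) (Fin b) F) = 0 := by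
      rw [Matrix.neg_mul, Matrix.mul_assoc
        (((A⁻¹ : GL (Fin a) F) : Matrix (Fin a) (Fin a) F) * B) _ _, Units.inv_mul,
        Matrix.mul_one, add_neg_cancel]
    have h3 : (0 : Matrix (Fin b) (Fin a) F) * (A : Matrix (Fin a) (Fin a) F)
        + ((D⁻¹ : GL (Fin b) F) : Matrix (Fin b) (Fin b) F) * (0 : Matrix (Fin b) (Fin a) F) = 0 := by
      simp
    have h4 : (0 : Matrix (Fin b) (Fin a) F) * B +
        ((D⁻¹ : GL (Fin b) F) : Matrix (Fin b) (Fin b) F) * (D : Matrix (Fin b) (Fin b) F) = 1 := by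
      rw [Matrix.zero_mul, zero_add]; exact Units.inv_mul D
    rw [h1, h2, h3, h4, bmat_one]

/-- The permutation matrix of `e` (with `1` at the entries `(i, e i)`), as an element
of `GL_k(F)`. -/
def permGL {k : ℕ} (e : Equiv.Perm (Fin k)) : GL (Fin k) F where
  val := (e.toPEquiv).toMatrix
  inv := (e.symm.toPEquiv).toMatrix
  val_inv := by
    rw [← PEquiv.toMatrix_trans, ← Equiv.toPEquiv_trans, Equiv.self_trans_symm,
      Equiv.toPEquiv_refl, PEquiv.toMatrix_refl]
  inv_val := by
    rw [← PEquiv.toMatrix_trans, ← Equiv.toPEquiv_trans, Equiv.symm_trans_self,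
      Equiv.toPEquiv_refl, PEquiv.toMatrix_refl]

/-- The block permutation matrix in `GL_k(F)` (`a + b = k`), whose upper right `a × a`
block is `I_a` and whose lower left `b × b` block is `I_b` (all other entries `0`).
In the notation of the paper, `wSwap F a b h` is the Weyl element `w_{b,a}`. -/
def wSwap (a b k : ℕ) (h : a + b = k) : GL (Fin k) F :=
  permGL F ((blockEquiv h).symm.trans ((Equiv.sumComm (Fin a) (Fin b)).trans
    (blockEquiv ((add_comm b a).trans h))))

variable {F}

/-- The space of the parabolic induction `σ ∘ π` (`σ` on `GL_m(F)`, `π` on `GL_n(F)`):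
functions `f : GL_{m+n}(F) → W ⊗ V` with `f(pg) = (σ ⊠ π)(p) f(g)` for all
`p ∈ P_{m,n}`. -/
def IndSpace {m n k : ℕ} (h : m + n = k) (σ : Representation ℂ (GL (Fin m) F) W)
    (π : Representation ℂ (GL (Fin n) F) V) :
    Submodule ℂ (GL (Fin k) F → W ⊗[ℂ] V) where
  carrier := {f | ∀ (A : GL (Fin m) F) (B : Matrix (Fin m) (Fin n) F) (D : GL (Fin n) F)
    (g : GL (Fin k) F), f (pElt F h A B D * g) = TensorProduct.map (σ A) (π D) (f g)}
  add_mem' := by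
    intro f f' hf hf' A B D g
    simp only [Pi.add_apply, hf A B D g, hf' A B D g, map_add]
  zero_mem' := by intro A B D g; simp
  smul_mem' := by
    intro c f hf A B D g
    simp only [Pi.smul_apply, hf A B D g, LinearMap.map_smul]

/-- The parabolic induction `σ ∘ π` as a representation of `GL_{m+n}(F)`, acting by
right translation on `IndSpace`. -/
def IndRep {m n k : ℕ} (h : m + n = k) (σ : Representation ℂ (GL (Fin m) F) W)
    (π : Representation ℂ (GL (Fin n) F) V) :
    Representation ℂ (GL (Fin k) F) (IndSpace h σ π) where
  toFun g := (LinearMap.funLeft ℂ (W ⊗[ℂ] V) (fun x => x * g)).restrict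
    (fun f hf => by
      intro A B D x
      simp only [LinearMap.funLeft_apply]
      rw [mul_assoc]
      exact hf A B D (x * g))
  map_one' := by
    apply LinearMap.ext
    rintro ⟨f, hf⟩
    apply Subtype.ext
    funext x
    simp [LinearMap.restrict_apply]
  map_mul' := by
    intro g₁ g₂
    apply LinearMap.ext
    rintro ⟨f, hf⟩
    apply Subtype.ext
    funext x
    simp [LinearMap.restrict_apply, Module.End.mul_apply, mul_assoc]
    exact congrArg f (mul_assoc x g₁ g₂).symm

/-- `f` is the `ψ`-Whittaker vector `f_{σ,π}` of the parabolic induction `σ ∘ π`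
attached to the Whittaker vectors `ξσ`, `ξπ`: it lies in the induced space, it is a
`ψ`-Whittaker vector for right translation, it is supported on the double coset
`P_{m,n} w_{n,m} U_{m+n}`, and `f(w_{n,m}) = ξσ ⊗ ξπ`. -/
def IsInducedWhittakerVector {m n k : ℕ} (h : m + n = k)
    (σ : Representation ℂ (GL (Fin m) F) W) (π : Representation ℂ (GL (Fin n) F) V)
    (ψ : AddChar F ℂ) (ξσ : W) (ξπ : V) (f : GL (Fin k) F → W ⊗[ℂ] V) : Prop :=
  f ∈ IndSpace h σ π ∧
  (∀ u : GL (Fin k) F, IsUnip F u → ∀ g, f (g * u) = psiU ψ u • f g) ∧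
  f (wSwap F m n k h) = ξσ ⊗ₜ[ℂ] ξπ ∧
  ∀ g, f g ≠ 0 → ∃ (A : GL (Fin m) F) (B : Matrix (Fin m) (Fin n) F) (D : GL (Fin n) F)
    (u : GL (Fin k) F), IsUnip F u ∧ g = pElt F h A B D * wSwap F m n k h * u

/-- The intertwining operator `U_{σ,π} : σ ∘ π → π ∘ σ`,
`(U_{σ,π} f)(g) = Σ_{u ∈ N_{n,m}} sw(f(w_{n,m} u g))`, where `sw` is the swap of the
two tensor factors. -/
def Uop {m n k : ℕ} (h : m + n = k) (f : GL (Fin k) F → W ⊗[ℂ] V) :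
    GL (Fin k) F → V ⊗[ℂ] W := fun g =>
  ∑ X : Matrix (Fin n) (Fin m) F,
    (TensorProduct.comm ℂ W V)
      (f (wSwap F m n k h * pElt F ((add_comm n m).trans h) (1 : GL (Fin n) F) X (1 : GL (Fin m) F) * g))

/-- `γ` is the Shahidi gamma factor `Γ(π × σ, ψ)` of `π` (a representation of `GL_n(F)`)
and `σ` (a representation of `GL_m(F)`): for some (equivalently, by uniqueness of
Whittaker vectors for representations of Whittaker type, any) choice of nonzero
`ψ`-Whittaker vectors `ξπ`, `ξσ`, the intertwining operator `U_{σ,π}` sends the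
Whittaker vector `f_{σ,π}` of `σ ∘ π` to `γ • f_{π,σ}`. -/
def IsShahidiGamma {n m : ℕ} (ψ : AddChar F ℂ) (π : Representation ℂ (GL (Fin n) F) V)
    (σ : Representation ℂ (GL (Fin m) F) W) (γ : ℂ) : Prop :=
  ∃ (ξπ : V) (ξσ : W) (fσπ : GL (Fin (m + n)) F → W ⊗[ℂ] V)
    (fπσ : GL (Fin (m + n)) F → V ⊗[ℂ] W),
    ξπ ≠ 0 ∧ ξσ ≠ 0 ∧ IsWhittakerVector π ψ ξπ ∧ IsWhittakerVector σ ψ ξσ ∧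
    IsInducedWhittakerVector rfl σ π ψ ξσ ξπ fσπ ∧
    IsInducedWhittakerVector (add_comm n m) π σ ψ ξπ ξσ fπσ ∧
    ∀ g, Uop rfl fσπ g = γ • fπσ g

/-- The projection `P_ψ = |U_n|⁻¹ Σ_{u ∈ U_n} ψ(u)⁻¹ π(u)` onto the subspace of
`ψ`-Whittaker vectors. -/
def besselOp {n : ℕ} (π : Representation ℂ (GL (Fin n) F) V) (ψ : AddChar F ℂ) :
    V →ₗ[ℂ] V :=
  (Fintype.card {u : GL (Fin n) F // IsUnip F u} : ℂ)⁻¹ •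
    ∑ u : {u : GL (Fin n) F // IsUnip F u}, (psiU ψ (u : GL (Fin n) F))⁻¹ • (π (u : GL (Fin n) F))

/-- The (normalized) Bessel function `J_{π,ψ}(g) = tr(P_ψ ∘ π(g))` of an irreducible
generic representation `π`. -/
def bessel {n : ℕ} (π : Representation ℂ (GL (Fin n) F) V) (ψ : AddChar F ℂ)
    (g : GL (Fin n) F) : ℂ :=
  LinearMap.trace ℂ V (besselOp π ψ ∘ₗ π g)

variable (F)

/-- `T` is a set of representatives for the left cosets `U_n\GL_n(F)`. -/
def IsTransversal {n : ℕ} (T : Finset (GL (Fin n) F)) : Prop :=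
  ∀ g : GL (Fin n) F, ∃! t, t ∈ T ∧ ∃ u, IsUnip F u ∧ g = u * t

/-- The scalar matrix `a · I_n` as an element of `GL_n(F)`. -/
def scalarGL (n : ℕ) (a : Fˣ) : GL (Fin n) F :=
  Units.map (Matrix.scalar (Fin n)).toMonoidHom a

variable {F}

/-- The representation `π` has central character `ω`. -/
def HasCentralCharacter {n : ℕ} (π : Representation ℂ (GL (Fin n) F) V) (ω : Fˣ → ℂˣ) : Prop :=
  ∀ (a : Fˣ) (v : V), π (scalarGL F n a) v = (ω a : ℂ) • v

/-- `π` is a cuspidal representation of `GL_n(F)`: for every decomposition `n = a + b`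
with `a, b ≥ 1`, the only vector invariant under the unipotent radical `N_{a,b}` is `0`.
(This is equivalent to the corresponding condition for all compositions of `n` with at
least two parts, since the unipotent radical attached to any such composition contains
the unipotent radical `N_{a,b}` with `a` its first part.) -/
def IsCuspidal {n : ℕ} (π : Representation ℂ (GL (Fin n) F) V) : Prop :=
  ∀ (a b : ℕ) (h : a + b = n), a ≠ 0 → b ≠ 0 →
    ∀ v : V, (∀ X : Matrix (Fin a) (Fin b) F, π (pElt F h 1 X 1) v = v) → v = 0

variable (F)

/-- The group homomorphism `g ↦ ᵗg⁻¹` of `GL_k(F)`. -/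
def glTransposeInv {k : ℕ} : GL (Fin k) F →* GL (Fin k) F where
  toFun g :=
    ⟨((g⁻¹ : GL (Fin k) F) : Matrix (Fin k) (Fin k) F)ᵀ, ((g : GL (Fin k) F) : Matrix (Fin k) (Fin k) F)ᵀ,
      by rw [← Matrix.transpose_mul, Units.mul_inv, Matrix.transpose_one],
      by rw [← Matrix.transpose_mul, Units.inv_mul, Matrix.transpose_one]⟩
  map_one' := by
    apply Units.ext
    simp
  map_mul' := by
    intro g h
    apply Units.ext
    show (((g * h)⁻¹ : GL (Fin k) F) : Matrix (Fin k) (Fin k) F)ᵀ = _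
    rw [_root_.mul_inv_rev]
    show ((((h⁻¹ : GL (Fin k) F) : Matrix (Fin k) (Fin k) F) *
      ((g⁻¹ : GL (Fin k) F) : Matrix (Fin k) (Fin k) F))ᵀ) = _
    rw [Matrix.transpose_mul]
    rfl

/-- The isomorphism `GL_a(F) ≅ GL_b(F)` induced by an equality `a = b`. -/
def glCongr {a b : ℕ} (h : a = b) : GL (Fin a) F ≃* GL (Fin b) F :=
  Units.mapEquiv ((Matrix.reindexAlgEquiv F F (finCongr h)).toRingEquiv.toMulEquiv)

/-- The diagonal matrix with (invertible) diagonal entries `d`, as an element of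
`GL_k(F)`. -/
def diagGL {k : ℕ} (d : Fin k → Fˣ) : GL (Fin k) F where
  val := Matrix.diagonal fun i => (d i : F)
  inv := Matrix.diagonal fun i => (((d i)⁻¹ : Fˣ) : F)
  val_inv := by
    rw [Matrix.diagonal_mul_diagonal]
    have : (fun i => ((d i : F) * (((d i)⁻¹ : Fˣ) : F))) = fun _ => (1 : F) :=
      funext fun i => Units.mul_inv _
    rw [this, Matrix.diagonal_one]
  inv_val := by
    rw [Matrix.diagonal_mul_diagonal]
    have : (fun i => ((((d i)⁻¹ : Fˣ) : F) * (d i : F))) = fun _ => (1 : F) :=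
      funext fun i => Units.inv_mul _
    rw [this, Matrix.diagonal_one]

/-- The matrix `σ_c ∈ GL_n(F)` whose upper right `(n-1) × (n-1)` block is `I_{n-1}`
and whose `(n,1)` entry is `c` (all other entries `0`). -/
def sigmaGL (n : ℕ) (c : Fˣ) : GL (Fin n) F :=
  diagGL F (fun i => if (i : ℕ) = n - 1 then c else 1) * permGL F (finRotate n)

/-- The matrix `τ_b ∈ GL_n(F)` whose `(1,n)` entry is `b` and whose lower left
`(n-1) × (n-1)` block is `I_{n-1}` (all other entries `0`). -/
def tauGL (n : ℕ) (b : Fˣ) : GL (Fin n) F :=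
  (permGL F (finRotate n))⁻¹ * diagGL F (fun i => if (i : ℕ) = n - 1 then b else 1)

/-- The diagonal matrix `d_k = diag(1, a, a², …, a^{k-1}) ∈ GL_k(F)`. -/
def dPow (k : ℕ) (a : Fˣ) : GL (Fin k) F :=
  diagGL F (fun i => a ^ (i : ℕ))

/-- The Fourier transform `F_ψ φ(y) = Σ_{x ∈ Fⁿ} φ(x) ψ(⟨x, y⟩)` of `φ : Fⁿ → ℂ`. -/
def fourier (ψ : AddChar F ℂ) {n : ℕ} (φ : (Fin n → F) → ℂ) : (Fin n → F) → ℂ :=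
  fun y => ∑ x : Fin n → F, φ x * ψ (∑ i, x i * y i)

/-- A multiplicative character `χ` of `Fˣ`, viewed as a representation of
`GL_1(F)` on `ℂ`. -/
def charRep (χ : Fˣ →* ℂˣ) : Representation ℂ (GL (Fin 1) F) ℂ where
  toFun g := ((χ (Matrix.GeneralLinearGroup.det g) : ℂ) • LinearMap.id : ℂ →ₗ[ℂ] ℂ)
  map_one' := by
    show (χ (Matrix.GeneralLinearGroup.det (1 : GL (Fin 1) F)) : ℂ) • LinearMap.id = 1
    rw [_root_.map_one, _root_.map_one, Units.val_one, one_smul]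
    rfl
  map_mul' := by
    intro g h
    apply LinearMap.ext
    intro x
    simp [Module.End.mul_apply, smul_smul, mul_comm]

/-- The equivalence `Σ i, Fin (ns i) ≃ Fin (ns 0) ⊕ Σ i, Fin (ns i.succ)`. -/
def sigmaSuccEquiv (r : ℕ) (ns : Fin (r + 1) → ℕ) :
    (Σ i : Fin (r + 1), Fin (ns i)) ≃ (Fin (ns 0) ⊕ Σ i : Fin r, Fin (ns i.succ)) where
  toFun x := Fin.cases (motive := fun i => Fin (ns i) → (Fin (ns 0) ⊕ Σ i : Fin r, Fin (ns i.succ)))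
    (fun y => Sum.inl y) (fun i y => Sum.inr ⟨i, y⟩) x.1 x.2
  invFun := Sum.elim (fun y => ⟨0, y⟩) (fun p => ⟨p.1.succ, p.2⟩)
  left_inv := by
    rintro ⟨i, y⟩
    induction i using Fin.cases <;> simp
  right_inv := by
    rintro (y | ⟨i, y⟩) <;> simp

/-- The order preserving equivalence `Σ i, Fin (ns i) ≃ Fin (∑ i, ns i)`, sending
`⟨i, x⟩` to `ns 0 + ⋯ + ns (i-1) + x` (blocks in their natural order). -/
def finSigmaEquiv : (r : ℕ) → (ns : Fin r → ℕ) → (Σ i : Fin r, Fin (ns i)) ≃ Fin (∑ i, ns i)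
  | 0, ns =>
    (Equiv.equivOfIsEmpty _ (Fin 0)).trans
      (finCongr (show (0 : ℕ) = ∑ i : Fin 0, ns i by simp))
  | (r + 1), ns =>
    (sigmaSuccEquiv r ns).trans
      ((Equiv.sumCongr (Equiv.refl (Fin (ns 0))) (finSigmaEquiv r (fun i => ns i.succ))).trans
        (finSumFinEquiv.trans (finCongr (Fin.sum_univ_succ ns).symm)))

/-- The index in `Fin (∑ j, ns j)` of the `x`-th element of the `i`-th block. -/
def blockIdx {r : ℕ} (ns : Fin r → ℕ) (i : Fin r) (x : Fin (ns i)) : Fin (∑ j, ns j) :=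
  finSigmaEquiv r ns ⟨i, x⟩

variable {F}
variable {r : ℕ} {ns : Fin r → ℕ} {Vs : Fin r → Type}
  [∀ i, AddCommGroup (Vs i)] [∀ i, Module ℂ (Vs i)]

/-- The space of the iterated parabolic induction `τ₁ ∘ ⋯ ∘ τ_r`: functions
`f : GL_{n₁ + ⋯ + n_r}(F) → V₁ ⊗ ⋯ ⊗ V_r` such that
`f(pg) = (τ₁(d₁) ⊗ ⋯ ⊗ τ_r(d_r)) f(g)` whenever `p` is block upper triangular with
diagonal blocks `d i ∈ GL_{n_i}(F)`. -/
def MultiIndSpace (τ : ∀ i, Representation ℂ (GL (Fin (ns i)) F) (Vs i)) :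
    Submodule ℂ (GL (Fin (∑ j, ns j)) F → ⨂[ℂ] i, Vs i) where
  carrier := {f | ∀ (p : GL (Fin (∑ j, ns j)) F) (d : ∀ i, GL (Fin (ns i)) F),
    (∀ (i i' : Fin r), i' < i → ∀ (x : Fin (ns i)) (x' : Fin (ns i')),
      (p : Matrix (Fin (∑ j, ns j)) (Fin (∑ j, ns j)) F) (blockIdx ns i x) (blockIdx ns i' x') = 0) →
    (∀ (i : Fin r) (x x' : Fin (ns i)),
      (p : Matrix (Fin (∑ j, ns j)) (Fin (∑ j, ns j)) F) (blockIdx ns i x) (blockIdx ns i x')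
        = ((d i : Matrix (Fin (ns i)) (Fin (ns i)) F)) x x') →
    ∀ g, f (p * g) = PiTensorProduct.map (fun i => τ i (d i)) (f g)}
  add_mem' := by
    intro f f' hf hf' p d h1 h2 g
    simp only [Pi.add_apply, hf p d h1 h2 g, hf' p d h1 h2 g, map_add]
  zero_mem' := by intro p d h1 h2 g; simp
  smul_mem' := by
    intro c f hf p d h1 h2 g
    simp only [Pi.smul_apply, hf p d h1 h2 g, LinearMap.map_smul]

/-- The iterated parabolic induction `τ₁ ∘ ⋯ ∘ τ_r` as a representation of
`GL_{n₁ + ⋯ + n_r}(F)`, acting by right translation. -/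
def MultiIndRep (τ : ∀ i, Representation ℂ (GL (Fin (ns i)) F) (Vs i)) :
    Representation ℂ (GL (Fin (∑ j, ns j)) F) (MultiIndSpace τ) where
  toFun g := (LinearMap.funLeft ℂ (⨂[ℂ] i, Vs i) (fun x => x * g)).restrict
    (fun f hf => by
      intro p d h1 h2 x
      simp only [LinearMap.funLeft_apply]
      rw [mul_assoc]
      exact hf p d h1 h2 (x * g))
  map_one' := by
    apply LinearMap.ext
    rintro ⟨f, hf⟩
    apply Subtype.ext
    funext x
    simp [LinearMap.restrict_apply]
  map_mul' := by
    intro g₁ g₂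
    apply LinearMap.ext
    rintro ⟨f, hf⟩
    apply Subtype.ext
    funext x
    simp [LinearMap.restrict_apply, Module.End.mul_apply, mul_assoc]
    exact congrArg f (mul_assoc x g₁ g₂).symm

end GammaFF

namespace GammaFF

open Matrix
open scoped TensorProduct Classical

section Statements

/-!
The involution `θ(g) = w ᵗg⁻¹ w` of `GL_k(F)`, with `w` the antidiagonal permutation matrix,
preserves `U_k` and turns `ψ` into `ψ⁻¹` there, so `π(w)` carries the `ψ`-Whittaker vectors of
`π` onto the `ψ⁻¹`-Whittaker vectors of `π̂`. On induced representations,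
`f ↦ sw ∘ f ∘ (x ↦ diag(w_m, w_n) θ(x))` carries `σ ∘ π` onto `π̂ ∘ σ̂`, maps `f_{σ,π}` and
`f_{π,σ}` to the Whittaker vectors `f_{π̂,σ̂}` and `f_{σ̂,π̂}` built from `π(w)ξ_π`, `σ(w)ξ_σ`, and
intertwines `U_{σ,π}` with `U_{π̂,σ̂}` (substitute `X ↦ -ᵗX` in the sum over `N`). Hence
`Γ(π × σ, ψ)` satisfies the defining identity of `Γ(σ̂ × π̂, ψ⁻¹)`, which determines the gamma
factor because Whittaker vectors of representations of Whittaker type are unique up to scalars.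
-/

section GeneralField

variable {F : Type} [Field F]

lemma permGL_mul {k : ℕ} (e f : Equiv.Perm (Fin k)) :
    permGL F e * permGL F f = permGL F (e.trans f) := by
  apply Units.ext
  change (e.toPEquiv.toMatrix : Matrix (Fin k) (Fin k) F) * f.toPEquiv.toMatrix = _
  rw [← PEquiv.toMatrix_trans, ← Equiv.toPEquiv_trans]
  rfl

lemma permGL_refl {k : ℕ} : permGL F (Equiv.refl (Fin k)) = 1 := by
  apply Units.ext
  change ((Equiv.refl (Fin k)).toPEquiv.toMatrix : Matrix (Fin k) (Fin k) F) = 1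
  rw [Equiv.toPEquiv_refl, PEquiv.toMatrix_refl]

lemma permGL_apply {k : ℕ} (e : Equiv.Perm (Fin k)) (i j : Fin k) :
    (permGL F e : Matrix (Fin k) (Fin k) F) i j = if e i = j then 1 else 0 := by
  change e.toPEquiv.toMatrix i j = _
  rw [PEquiv.toMatrix_apply, Equiv.toPEquiv_apply]
  simp [eq_comm]

lemma glTransposeInv_permGL {k : ℕ} (e : Equiv.Perm (Fin k)) :
    glTransposeInv F (permGL F e) = permGL F e := by
  apply Units.ext
  change (e.symm.toPEquiv.toMatrix : Matrix (Fin k) (Fin k) F)ᵀ = e.toPEquiv.toMatrix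
  rw [Equiv.toPEquiv_symm, PEquiv.toMatrix_symm, Matrix.transpose_transpose]

lemma glTransposeInv_glTransposeInv {k : ℕ} (g : GL (Fin k) F) :
    glTransposeInv F (glTransposeInv F g) = g :=
  Units.ext (Matrix.transpose_transpose (g : Matrix (Fin k) (Fin k) F))

lemma glCongr_self {k : ℕ} (c : k = k) (g : GL (Fin k) F) : glCongr F c g = g :=
  Units.ext (Matrix.ext fun _ _ => rfl)

variable (F) in
/-- The antidiagonal permutation matrix `w_k`. -/
def revGL (k : ℕ) : GL (Fin k) F := permGL F Fin.revPerm

lemma revGL_mul_revGL {k : ℕ} : revGL F k * revGL F k = 1 := by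
  rw [revGL, permGL_mul, ← permGL_refl]
  congr 1
  ext i
  simp

lemma revGL_inv {k : ℕ} : (revGL F k)⁻¹ = revGL F k :=
  inv_eq_of_mul_eq_one_right revGL_mul_revGL

lemma glTransposeInv_revGL {k : ℕ} : glTransposeInv F (revGL F k) = revGL F k :=
  glTransposeInv_permGL _

lemma revGL_mul_matrix {k : ℕ} {ι : Type} (M : Matrix (Fin k) ι F) :
    (revGL F k : Matrix (Fin k) (Fin k) F) * M = M.submatrix Fin.rev id := by
  rw [revGL]
  exact PEquiv.toMatrix_toPEquiv_mul _ _

lemma matrix_mul_revGL {k : ℕ} {ι : Type} [Fintype ι] (M : Matrix ι (Fin k) F) :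
    M * (revGL F k : Matrix (Fin k) (Fin k) F) = M.submatrix id Fin.rev := by
  rw [revGL]
  change M * (Fin.revPerm.toPEquiv.toMatrix) = _
  rw [PEquiv.mul_toMatrix_toPEquiv, Fin.revPerm_symm]
  rfl

lemma revGL_mul_mul_revGL {k : ℕ} (M : Matrix (Fin k) (Fin k) F) :
    (revGL F k : Matrix (Fin k) (Fin k) F) * M * (revGL F k : Matrix (Fin k) (Fin k) F) =
      M.submatrix Fin.rev Fin.rev := by
  rw [revGL_mul_matrix, matrix_mul_revGL, Matrix.submatrix_submatrix]
  rfl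

end GeneralField

section Unipotent

variable {F : Type} [Field F]

lemma isUnip_one {k : ℕ} : IsUnip F (1 : GL (Fin k) F) :=
  ⟨fun i => Matrix.one_apply_eq i, fun _ _ hij => Matrix.one_apply_ne (by grind)⟩

lemma isUnip_mul {k : ℕ} {u v : GL (Fin k) F} (hu : IsUnip F u) (hv : IsUnip F v) :
    IsUnip F (u * v) := by
  obtain ⟨hu1, hu2⟩ := hu
  obtain ⟨hv1, hv2⟩ := hv
  refine ⟨fun i => ?_, fun i j hij => ?_⟩
  · change ((u : Matrix (Fin k) (Fin k) F) * (v : Matrix (Fin k) (Fin k) F)) i i = 1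
    rw [Matrix.mul_apply, Finset.sum_eq_single i, hu1, hv1, one_mul]
    · intro l _ hl
      rcases lt_or_gt_of_ne (Fin.val_ne_of_ne hl) with hlt | hgt
      · rw [hu2 i l hlt, zero_mul]
      · rw [hv2 l i hgt, mul_zero]
    · simp
  · change ((u : Matrix (Fin k) (Fin k) F) * (v : Matrix (Fin k) (Fin k) F)) i j = 0
    rw [Matrix.mul_apply]
    refine Finset.sum_eq_zero fun l _ => ?_
    rcases lt_or_ge (l : ℕ) i with hlt | hle
    · rw [hu2 i l hlt, zero_mul]
    · rw [hv2 l j (lt_of_lt_of_le hij hle), mul_zero]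

lemma isUnip_inv [Finite F] {k : ℕ} {u : GL (Fin k) F} (hu : IsUnip F u) :
    IsUnip F u⁻¹ := by
  have hinv : u⁻¹ = u ^ (orderOf u - 1) := by
    refine inv_eq_of_mul_eq_one_right ?_
    rw [← pow_succ', Nat.sub_add_cancel (orderOf_pos u), pow_orderOf_eq_one]
  rw [hinv]
  induction orderOf u - 1 with
  | zero => exact isUnip_one
  | succ t ih => rw [pow_succ]; exact isUnip_mul ih hu

lemma supDiag_inv [Finite F] {k : ℕ} {u : GL (Fin k) F} (hu : IsUnip F u) :
    supDiag F ((u⁻¹ : GL (Fin k) F) : Matrix (Fin k) (Fin k) F) =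
      -supDiag F (u : Matrix (Fin k) (Fin k) F) := by
  obtain ⟨hu1, hu2⟩ := hu
  obtain ⟨hi1, hi2⟩ := isUnip_inv ⟨hu1, hu2⟩
  -- the only nonzero terms of the `(i, i + 1)` entry of `u u⁻¹ = 1` are those at `i` and `i + 1`
  have key : ∀ i j : Fin k, (j : ℕ) = i + 1 →
      ((u⁻¹ : GL (Fin k) F) : Matrix (Fin k) (Fin k) F) i j =
        -(u : Matrix (Fin k) (Fin k) F) i j := by
    intro i j hij
    have hne : i ≠ j := fun h => by rw [h] at hij; omega
    have h0 : ((u : Matrix (Fin k) (Fin k) F) *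
        ((u⁻¹ : GL (Fin k) F) : Matrix (Fin k) (Fin k) F)) i j = 0 := by
      rw [u.mul_inv]
      exact Matrix.one_apply_ne hne
    rw [Matrix.mul_apply, ← Finset.sum_subset (Finset.subset_univ {i, j}),
      Finset.sum_pair hne, hu1, one_mul, hi1, mul_one] at h0
    · exact eq_neg_of_add_eq_zero_left h0
    · intro l _ hl
      simp only [Finset.mem_insert, Finset.mem_singleton, not_or] at hl
      rcases lt_or_ge (l : ℕ) i with hlt | hge
      · rw [hu2 i l hlt, zero_mul]
      · rw [hi2 l j (by have := Fin.val_ne_of_ne hl.1; have := Fin.val_ne_of_ne hl.2; omega),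
          mul_zero]
  simp only [supDiag, ← Finset.sum_neg_distrib]
  refine Finset.sum_congr rfl fun i _ => Finset.sum_congr rfl fun j _ => ?_
  split_ifs with hij
  · exact key i j hij
  · exact neg_zero.symm

lemma supDiag_submatrix_rev {k : ℕ} (M : Matrix (Fin k) (Fin k) F) :
    supDiag F (M.submatrix Fin.rev Fin.rev) = supDiag F Mᵀ := by
  unfold supDiag
  rw [Finset.sum_comm]
  refine Fintype.sum_equiv Fin.revPerm _ _ fun j => Fintype.sum_equiv Fin.revPerm _ _ fun i => ?_
  have hi := i.isLt
  have hj := j.isLt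
  simp only [Fin.revPerm_apply, Matrix.submatrix_apply, Matrix.transpose_apply,
    Fin.val_rev]
  congr 1
  apply propext
  omega

end Unipotent

section BlockReversal

lemma blockEquiv_rev {a b k : ℕ} (h : a + b = k) (h' : b + a = k) (s : Fin b ⊕ Fin a) :
    Fin.rev (blockEquiv h' s) = blockEquiv h (Sum.swap (Sum.map Fin.rev Fin.rev s)) := by
  apply Fin.ext
  rcases s with x | y
  · have := x.isLt
    simp [blockEquiv, Fin.val_rev]
    omega
  · have := y.isLt
    simp [blockEquiv, Fin.val_rev]
    omega

lemma blockEquiv_symm_rev {a b k : ℕ} (h : a + b = k) (h' : b + a = k) (i : Fin k) :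
    (blockEquiv h).symm (Fin.rev i) =
      Sum.swap (Sum.map Fin.rev Fin.rev ((blockEquiv h').symm i)) := by
  rw [Equiv.symm_apply_eq, ← blockEquiv_rev h h', Equiv.apply_symm_apply]

lemma bmat_transpose {F : Type} {a b k : ℕ} (h : a + b = k) (X : Matrix (Fin a) (Fin a) F)
    (B : Matrix (Fin a) (Fin b) F) (C : Matrix (Fin b) (Fin a) F)
    (Y : Matrix (Fin b) (Fin b) F) :
    (bmat F h X B C Y)ᵀ = bmat F h Xᵀ Cᵀ Bᵀ Yᵀ := by
  rw [bmat, Matrix.transpose_submatrix, Matrix.fromBlocks_transpose, bmat]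

variable {F : Type} [Field F]

lemma revGL_mul_bmat_mul_revGL {a b k : ℕ} (h : a + b = k) (h' : b + a = k)
    (X : Matrix (Fin a) (Fin a) F) (B : Matrix (Fin a) (Fin b) F)
    (C : Matrix (Fin b) (Fin a) F) (Y : Matrix (Fin b) (Fin b) F) :
    (revGL F k : Matrix (Fin k) (Fin k) F) * bmat F h X B C Y * (revGL F k : Matrix _ _ F) =
      bmat F h' (Y.submatrix Fin.rev Fin.rev) (C.submatrix Fin.rev Fin.rev)
        (B.submatrix Fin.rev Fin.rev) (X.submatrix Fin.rev Fin.rev) := by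
  rw [revGL_mul_mul_revGL]
  ext i j
  simp only [bmat, Matrix.submatrix_apply, blockEquiv_symm_rev h h']
  rcases (blockEquiv h').symm i with x | y <;> rcases (blockEquiv h').symm j with x' | y' <;>
    rfl

variable (F) in
/-- Unlike `g ↦ ᵗg⁻¹`, the involution `g ↦ w_k ᵗg⁻¹ w_k` preserves `U_k`. -/
def revTransposeInv {k : ℕ} : GL (Fin k) F →* GL (Fin k) F :=
  (MulAut.conj (revGL F k)).toMonoidHom.comp (glTransposeInv F)

lemma revTransposeInv_apply {k : ℕ} (g : GL (Fin k) F) :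
    revTransposeInv F g = revGL F k * glTransposeInv F g * revGL F k := by
  simp [revTransposeInv, revGL_inv]

lemma coe_revTransposeInv {k : ℕ} (g : GL (Fin k) F) :
    (revTransposeInv F g : Matrix (Fin k) (Fin k) F) =
      ((g⁻¹ : GL (Fin k) F) : Matrix (Fin k) (Fin k) F)ᵀ.submatrix Fin.rev Fin.rev := by
  rw [revTransposeInv_apply, Units.val_mul, Units.val_mul, revGL_mul_mul_revGL]
  rfl

lemma revGL_mul_revTransposeInv {k : ℕ} (g : GL (Fin k) F) :
    revGL F k * revTransposeInv F g = glTransposeInv F g * revGL F k := by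
  rw [revTransposeInv_apply, ← mul_assoc, ← mul_assoc, revGL_mul_revGL, one_mul]

lemma revTransposeInv_revTransposeInv {k : ℕ} (g : GL (Fin k) F) :
    revTransposeInv F (revTransposeInv F g) = g := by
  rw [revTransposeInv_apply, revTransposeInv_apply, map_mul, map_mul, glTransposeInv_revGL,
    glTransposeInv_glTransposeInv]
  simp only [← mul_assoc, revGL_mul_revGL, one_mul]
  rw [mul_assoc, revGL_mul_revGL, mul_one]

lemma revTransposeInv_permGL {k : ℕ} (e : Equiv.Perm (Fin k)) :
    revTransposeInv F (permGL F e) = permGL F ((Fin.revPerm.trans e).trans Fin.revPerm) := by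
  rw [revTransposeInv_apply, glTransposeInv_permGL, revGL, permGL_mul, permGL_mul]

lemma revTransposeInv_revGL {k : ℕ} : revTransposeInv F (revGL F k) = revGL F k := by
  rw [revTransposeInv_apply, glTransposeInv_revGL, revGL_mul_revGL, one_mul]

lemma revTransposeInv_wSwap {a b k : ℕ} (h : a + b = k) (h' : b + a = k) :
    revTransposeInv F (wSwap F a b k h) = wSwap F b a k h' := by
  rw [wSwap, revTransposeInv_permGL, wSwap]
  congr 1
  ext i
  simp only [Equiv.trans_apply, Fin.revPerm_apply, Equiv.sumComm_apply]
  rw [blockEquiv_symm_rev h h' i, Sum.swap_swap, blockEquiv_rev h ((add_comm b a).trans h)]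
  congr 1
  rcases (blockEquiv h').symm i with x | y <;> simp

variable [Finite F]

lemma isUnip_revTransposeInv {k : ℕ} {u : GL (Fin k) F} (hu : IsUnip F u) :
    IsUnip F (revTransposeInv F u) := by
  obtain ⟨hi1, hi2⟩ := isUnip_inv hu
  refine ⟨fun i => by rw [coe_revTransposeInv]; exact hi1 _, fun i j hij => ?_⟩
  rw [coe_revTransposeInv]
  apply hi2
  have := i.isLt
  have := j.isLt
  simp only [Fin.val_rev]
  omega

lemma psiU_revTransposeInv {k : ℕ} (ψ : AddChar F ℂ) {u : GL (Fin k) F} (hu : IsUnip F u) :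
    psiU ψ (revTransposeInv F u) = psiU ψ⁻¹ u := by
  rw [psiU, coe_revTransposeInv, supDiag_submatrix_rev, Matrix.transpose_transpose,
    supDiag_inv hu, AddChar.map_neg_eq_inv, psiU, AddChar.inv_apply']

end BlockReversal

section Parabolic

variable {F : Type} [Field F] [Fintype F] [DecidableEq F]

lemma coe_pElt {a b k : ℕ} (h : a + b = k) (A : GL (Fin a) F) (B : Matrix (Fin a) (Fin b) F)
    (D : GL (Fin b) F) :
    (pElt F h A B D : Matrix (Fin k) (Fin k) F) =
      bmat F h (A : Matrix (Fin a) (Fin a) F) B 0 (D : Matrix (Fin b) (Fin b) F) := rfl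

lemma pElt_mul {a b k : ℕ} (h : a + b = k) (A A' : GL (Fin a) F)
    (B B' : Matrix (Fin a) (Fin b) F) (D D' : GL (Fin b) F) :
    pElt F h A B D * pElt F h A' B' D' =
      pElt F h (A * A') ((A : Matrix (Fin a) (Fin a) F) * B' + B * (D' : Matrix (Fin b) (Fin b) F))
        (D * D') := by
  apply Units.ext
  rw [Units.val_mul, coe_pElt, coe_pElt, bmat_mul, coe_pElt]
  congr 1 <;> simp

lemma pElt_one {a b k : ℕ} (h : a + b = k) :
    pElt F h (1 : GL (Fin a) F) 0 (1 : GL (Fin b) F) = 1 :=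
  Units.ext (bmat_one F h)

lemma pElt_permGL {a b k : ℕ} (h : a + b = k) (ea : Equiv.Perm (Fin a))
    (eb : Equiv.Perm (Fin b)) :
    pElt F h (permGL F ea) 0 (permGL F eb) =
      permGL F ((blockEquiv h).symm.trans ((ea.sumCongr eb).trans (blockEquiv h))) := by
  apply Units.ext
  ext i j
  have hiff : ∀ s, blockEquiv h s = j ↔ s = (blockEquiv h).symm j := fun _ =>
    (Equiv.eq_symm_apply _).symm
  simp only [coe_pElt, permGL_apply, Equiv.trans_apply, hiff, bmat, Matrix.submatrix_apply]
  rcases (blockEquiv h).symm i with x | y <;> rcases (blockEquiv h).symm j with x' | y' <;>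
    simp [permGL_apply]

lemma revTransposeInv_pElt {a b k : ℕ} (h : a + b = k) (h' : b + a = k) (A : GL (Fin a) F)
    (B : Matrix (Fin a) (Fin b) F) (D : GL (Fin b) F) :
    revTransposeInv F (pElt F h A B D) =
      pElt F h' (revTransposeInv F D)
        ((-(((A⁻¹ : GL (Fin a) F) : Matrix (Fin a) (Fin a) F) * B *
          ((D⁻¹ : GL (Fin b) F) : Matrix (Fin b) (Fin b) F)))ᵀ.submatrix Fin.rev Fin.rev)
        (revTransposeInv F A) := by
  apply Units.ext
  rw [coe_revTransposeInv, coe_pElt, coe_revTransposeInv, coe_revTransposeInv,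
    ← revGL_mul_mul_revGL]
  change _ * (bmat F h _ _ 0 _)ᵀ * _ = _
  rw [bmat_transpose, revGL_mul_bmat_mul_revGL h h']
  congr 1

lemma revTransposeInv_pElt_one {a b k : ℕ} (h : a + b = k) (h' : b + a = k)
    (X : Matrix (Fin a) (Fin b) F) :
    revTransposeInv F (pElt F h 1 X 1) = pElt F h' 1 (-(Xᵀ.submatrix Fin.rev Fin.rev)) 1 := by
  rw [revTransposeInv_pElt h h', map_one, map_one]
  congr 1
  ext i j
  simp

variable (F) in
def blockRevGL {a b k : ℕ} (h : a + b = k) : GL (Fin k) F :=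
  pElt F h (revGL F a) 0 (revGL F b)

lemma blockRevGL_eq_permGL {a b k : ℕ} (h : a + b = k) :
    blockRevGL F h = permGL F ((blockEquiv h).symm.trans
      ((Equiv.sumCongr Fin.revPerm Fin.revPerm).trans (blockEquiv h))) :=
  pElt_permGL h _ _

lemma blockRevGL_mul_blockRevGL {a b k : ℕ} (h : a + b = k) :
    blockRevGL F h * blockRevGL F h = 1 := by
  rw [blockRevGL, pElt_mul, revGL_mul_revGL, revGL_mul_revGL, Matrix.mul_zero, Matrix.zero_mul,
    add_zero, pElt_one]

lemma blockRevGL_mul_wSwap {a b k : ℕ} (h : a + b = k) (h' : b + a = k) :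
    blockRevGL F h * wSwap F a b k h = wSwap F a b k h * blockRevGL F h' := by
  rw [blockRevGL_eq_permGL, blockRevGL_eq_permGL, wSwap, permGL_mul, permGL_mul]
  congr 1
  ext i
  simp only [Equiv.trans_apply, Equiv.symm_apply_apply, Equiv.sumCongr_apply,
    Equiv.sumComm_apply]
  congr 1
  rcases (blockEquiv h).symm i with x | y <;> simp

lemma revTransposeInv_blockRevGL {a b k : ℕ} (h : a + b = k) (h' : b + a = k) :
    revTransposeInv F (blockRevGL F h) = blockRevGL F h' := by
  rw [blockRevGL, revTransposeInv_pElt h h', revTransposeInv_revGL, revTransposeInv_revGL,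
    blockRevGL]
  congr 1
  simp

lemma blockRevGL_mul_pElt_one {a b k : ℕ} (h : a + b = k) (Y : Matrix (Fin a) (Fin b) F) :
    blockRevGL F h * pElt F h 1 Y 1 =
      pElt F h 1 (Y.submatrix Fin.rev Fin.rev) 1 * blockRevGL F h := by
  rw [blockRevGL, pElt_mul, pElt_mul]
  congr 1
  · rw [mul_one, one_mul]
  · simp only [Matrix.zero_mul, Matrix.mul_zero, add_zero, zero_add, Units.val_one,
      revGL_mul_matrix, matrix_mul_revGL]
    ext i j
    simp
  · rw [mul_one, one_mul]

lemma exists_blockRevGL_mul_revTransposeInv_pElt {a b k : ℕ} (h : a + b = k) (h' : b + a = k)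
    (A : GL (Fin a) F) (B : Matrix (Fin a) (Fin b) F) (D : GL (Fin b) F) :
    ∃ E : Matrix (Fin b) (Fin a) F, blockRevGL F h' * revTransposeInv F (pElt F h A B D) =
      pElt F h' (glTransposeInv F D * revGL F b) E (glTransposeInv F A * revGL F a) := by
  rw [blockRevGL, revTransposeInv_pElt h h', pElt_mul, revGL_mul_revTransposeInv,
    revGL_mul_revTransposeInv]
  exact ⟨_, rfl⟩

lemma blockRevGL_mul_revTransposeInv_wSwap_mul_pElt {p q k : ℕ} (h : p + q = k)
    (h' : q + p = k) (X : Matrix (Fin p) (Fin q) F) (x : GL (Fin k) F) :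
    blockRevGL F h * revTransposeInv F (wSwap F q p k h' * pElt F h 1 X 1 * x) =
      wSwap F p q k h * pElt F h' 1 (-Xᵀ) 1 * (blockRevGL F h' * revTransposeInv F x) := by
  have hX : (-(Xᵀ.submatrix Fin.rev Fin.rev)).submatrix Fin.rev Fin.rev = -Xᵀ := by
    ext i j
    simp
  rw [map_mul, map_mul, revTransposeInv_wSwap h' h, revTransposeInv_pElt_one h h', ← mul_assoc,
    ← mul_assoc, blockRevGL_mul_wSwap h h', mul_assoc (wSwap F p q k h),
    blockRevGL_mul_pElt_one, hX]
  simp only [mul_assoc]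

end Parabolic

lemma tmul_ne_zero {K M N : Type*} [Field K] [AddCommGroup M] [Module K M] [AddCommGroup N]
    [Module K N] {m : M} {n : N} (hm : m ≠ 0) (hn : n ≠ 0) : m ⊗ₜ[K] n ≠ 0 := by
  obtain ⟨φ, hφ⟩ : ∃ φ : Module.Dual K M, φ m ≠ 0 := by
    simpa using (Module.forall_dual_apply_eq_zero_iff K m).not.mpr hm
  obtain ⟨χ, hχ⟩ : ∃ χ : Module.Dual K N, χ n ≠ 0 := by
    simpa using (Module.forall_dual_apply_eq_zero_iff K n).not.mpr hn
  intro h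
  have := congrArg (TensorProduct.dualDistrib K M N (φ ⊗ₜ χ)) h
  rw [TensorProduct.dualDistrib_apply, map_zero] at this
  exact mul_ne_zero hφ hχ this

section Whittaker

variable {F : Type} [Field F] {V : Type} [AddCommGroup V] [Module ℂ V] {k : ℕ}
  {π : Representation ℂ (GL (Fin k) F) V} {ψ : AddChar F ℂ}

lemma WhittakerType.exists_eq_smul (hπ : WhittakerType π ψ) {ξ ξ' : V} (hξ : ξ ≠ 0)
    (hwξ : IsWhittakerVector π ψ ξ) (hwξ' : IsWhittakerVector π ψ ξ') : ∃ c : ℂ, ξ' = c • ξ := by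
  obtain ⟨v, -, -, hv⟩ := hπ
  obtain ⟨a, rfl⟩ := hv ξ hwξ
  obtain ⟨b, rfl⟩ := hv ξ' hwξ'
  have ha : a ≠ 0 := by rintro rfl; exact hξ (zero_smul ℂ v)
  exact ⟨b / a, by rw [smul_smul, div_mul_cancel₀ b ha]⟩

lemma representation_revGL_revGL (v : V) : π (revGL F k) (π (revGL F k) v) = v := by
  rw [← Module.End.mul_apply, ← map_mul, revGL_mul_revGL, map_one, Module.End.one_apply]

lemma representation_revGL_injective : Function.Injective (π (revGL F k)) :=
  Function.LeftInverse.injective representation_revGL_revGL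

lemma comp_glTransposeInv_comp_glTransposeInv :
    (π.comp (glTransposeInv F)).comp (glTransposeInv F) = π :=
  MonoidHom.ext fun g => by rw [MonoidHom.comp_apply, MonoidHom.comp_apply,
    glTransposeInv_glTransposeInv]

variable [Finite F]

lemma IsWhittakerVector.comp_glTransposeInv {v : V} (hv : IsWhittakerVector π ψ v) :
    IsWhittakerVector (π.comp (glTransposeInv F)) ψ⁻¹ (π (revGL F k) v) := by
  intro u hu
  calc π (glTransposeInv F u) (π (revGL F k) v)
      = π (revGL F k) (π (revTransposeInv F u) v) := by
        rw [← Module.End.mul_apply, ← map_mul, ← Module.End.mul_apply, ← map_mul,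
          revGL_mul_revTransposeInv]
    _ = psiU ψ⁻¹ u • π (revGL F k) v := by
        rw [hv _ (isUnip_revTransposeInv hu), map_smul, psiU_revTransposeInv ψ hu]

lemma IsWhittakerVector.of_comp_glTransposeInv {v : V}
    (hv : IsWhittakerVector (π.comp (glTransposeInv F)) ψ⁻¹ v) :
    IsWhittakerVector π ψ (π (revGL F k) v) := by
  simpa only [comp_glTransposeInv_comp_glTransposeInv, inv_inv, MonoidHom.comp_apply,
    glTransposeInv_revGL] using hv.comp_glTransposeInv

lemma WhittakerType.comp_glTransposeInv (hπ : WhittakerType π ψ) :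
    WhittakerType (π.comp (glTransposeInv F)) ψ⁻¹ := by
  obtain ⟨v, hv0, hv, hspan⟩ := hπ
  refine ⟨π (revGL F k) v, (map_ne_zero_iff _ representation_revGL_injective).mpr hv0,
    hv.comp_glTransposeInv, fun w hw => ?_⟩
  obtain ⟨c, hc⟩ := hspan _ hw.of_comp_glTransposeInv
  exact ⟨c, by rw [← representation_revGL_revGL (π := π) w, hc, map_smul]⟩

end Whittaker

section InducedWhittaker

variable {F : Type} [Field F] [Fintype F] [DecidableEq F]
  {P Q : Type} [AddCommGroup P] [Module ℂ P] [AddCommGroup Q] [Module ℂ Q] {p q k : ℕ}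
  {ρ : Representation ℂ (GL (Fin p) F) P} {τ : Representation ℂ (GL (Fin q) F) Q}
  {ψ : AddChar F ℂ} {ξρ : P} {ξτ : Q}

lemma IsInducedWhittakerVector.apply_pElt_mul_wSwap_mul {h : p + q = k}
    {f : GL (Fin k) F → P ⊗[ℂ] Q} (hf : IsInducedWhittakerVector h ρ τ ψ ξρ ξτ f)
    (A : GL (Fin p) F) (B : Matrix (Fin p) (Fin q) F) (D : GL (Fin q) F) {u : GL (Fin k) F}
    (hu : IsUnip F u) :
    f (pElt F h A B D * wSwap F p q k h * u) = psiU ψ u • (ρ A ξρ ⊗ₜ τ D ξτ) := by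
  obtain ⟨hind, hwh, hval, -⟩ := hf
  rw [mul_assoc, hind, hwh u hu, hval, map_smul, TensorProduct.map_tmul]

lemma IsInducedWhittakerVector.eq_smul {h : p + q = k} {f f' : GL (Fin k) F → P ⊗[ℂ] Q}
    {a b : ℂ} (hf : IsInducedWhittakerVector h ρ τ ψ ξρ ξτ f)
    (hf' : IsInducedWhittakerVector h ρ τ ψ (a • ξρ) (b • ξτ) f') : f' = (a * b) • f := by
  funext g
  by_cases hg : ∃ (A : GL (Fin p) F) (B : Matrix (Fin p) (Fin q) F) (D : GL (Fin q) F)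
      (u : GL (Fin k) F), IsUnip F u ∧ g = pElt F h A B D * wSwap F p q k h * u
  · obtain ⟨A, B, D, u, hu, rfl⟩ := hg
    rw [Pi.smul_apply, hf'.apply_pElt_mul_wSwap_mul A B D hu, hf.apply_pElt_mul_wSwap_mul A B D hu,
      map_smul, map_smul, TensorProduct.smul_tmul_smul, smul_comm]
  · have hzero : ∀ {ξρ' : P} {ξτ' : Q} {f'' : GL (Fin k) F → P ⊗[ℂ] Q},
        IsInducedWhittakerVector h ρ τ ψ ξρ' ξτ' f'' → f'' g = 0 :=
      fun ⟨_, _, _, hsupp⟩ => by_contra fun hne => hg (hsupp g hne)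
    rw [Pi.smul_apply, hzero hf, hzero hf', smul_zero]

lemma Uop_smul (h : p + q = k) (c : ℂ) (f : GL (Fin k) F → P ⊗[ℂ] Q) :
    Uop h (c • f) = c • Uop h f := by
  funext g
  simp only [Uop, Pi.smul_apply, map_smul, Finset.smul_sum]

theorem IsShahidiGamma.unique {n m : ℕ} {V W : Type} [AddCommGroup V] [Module ℂ V]
    [AddCommGroup W] [Module ℂ W] {π : Representation ℂ (GL (Fin n) F) V}
    {σ : Representation ℂ (GL (Fin m) F) W} (hπ : WhittakerType π ψ) (hσ : WhittakerType σ ψ)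
    {γ₁ γ₂ : ℂ} (h₁ : IsShahidiGamma ψ π σ γ₁) (h₂ : IsShahidiGamma ψ π σ γ₂) : γ₁ = γ₂ := by
  obtain ⟨ξπ, ξσ, fσπ, fπσ, hξπ, hξσ, hwπ, hwσ, hfσπ, ⟨-, -, hval, -⟩, hU⟩ := h₁
  obtain ⟨ξπ', ξσ', fσπ', fπσ', hξπ', hξσ', hwπ', hwσ', hfσπ', ⟨-, -, hval', -⟩, hU'⟩ := h₂
  obtain ⟨c, rfl⟩ := hπ.exists_eq_smul hξπ hwπ hwπ'
  obtain ⟨d, rfl⟩ := hσ.exists_eq_smul hξσ hwσ hwσ'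
  have hf : fσπ' = (d * c) • fσπ := hfσπ.eq_smul hfσπ'
  -- compare both sides of `U f = γ f` at the Weyl element, where `f_{π,σ}` is `ξπ ⊗ ξσ`
  set w := wSwap F n m (m + n) (add_comm n m)
  have key : γ₂ • ((c • ξπ) ⊗ₜ[ℂ] (d • ξσ)) = γ₁ • ((c • ξπ) ⊗ₜ[ℂ] (d • ξσ)) :=
    calc γ₂ • ((c • ξπ) ⊗ₜ[ℂ] (d • ξσ)) = Uop rfl fσπ' w := by rw [hU', hval']
      _ = (d * c) • γ₁ • (ξπ ⊗ₜ[ℂ] ξσ) := by rw [hf, Uop_smul, Pi.smul_apply, hU, hval]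
      _ = γ₁ • ((c • ξπ) ⊗ₜ[ℂ] (d • ξσ)) := by
        rw [TensorProduct.smul_tmul_smul, smul_comm, mul_comm]
  exact ((smul_left_injective ℂ (tmul_ne_zero hξπ' hξσ')).eq_iff.mp key).symm

variable (F) in
/-- Realizes the isomorphism `ρ ∘ τ ≅ τ̂ ∘ ρ̂`. -/
def hatFun (h : p + q = k) (f : GL (Fin k) F → P ⊗[ℂ] Q) : GL (Fin k) F → Q ⊗[ℂ] P :=
  fun x => TensorProduct.comm ℂ P Q (f (blockRevGL F h * revTransposeInv F x))

lemma hatFun_mem_indSpace {h : p + q = k} (h' : q + p = k) {f : GL (Fin k) F → P ⊗[ℂ] Q}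
    (hf : f ∈ IndSpace h ρ τ) :
    hatFun F h f ∈ IndSpace h' (τ.comp (glTransposeInv F)) (ρ.comp (glTransposeInv F)) := by
  intro A B D g
  obtain ⟨E, hE⟩ := exists_blockRevGL_mul_revTransposeInv_pElt h' h A B D
  have hrev : f (blockRevGL F h * revTransposeInv F g) =
      TensorProduct.map (ρ (revGL F p)) (τ (revGL F q)) (f (revTransposeInv F g)) := hf _ _ _ _
  rw [hatFun, hatFun, map_mul, ← mul_assoc, hE, hf, hrev, TensorProduct.map_comm,
    TensorProduct.map_map, map_mul, map_mul]
  rfl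

lemma hatFun_apply_mul (h : p + q = k) {f : GL (Fin k) F → P ⊗[ℂ] Q}
    (hf : ∀ u : GL (Fin k) F, IsUnip F u → ∀ g, f (g * u) = psiU ψ u • f g)
    {u : GL (Fin k) F} (hu : IsUnip F u) (g : GL (Fin k) F) :
    hatFun F h f (g * u) = psiU ψ⁻¹ u • hatFun F h f g := by
  rw [hatFun, hatFun, map_mul, ← mul_assoc, hf _ (isUnip_revTransposeInv hu),
    psiU_revTransposeInv ψ hu, map_smul]

lemma exists_eq_of_hatFun_ne_zero {h : p + q = k} (h' : q + p = k)
    {f : GL (Fin k) F → P ⊗[ℂ] Q}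
    (hf : ∀ g, f g ≠ 0 → ∃ (A : GL (Fin p) F) (B : Matrix (Fin p) (Fin q) F) (D : GL (Fin q) F)
      (u : GL (Fin k) F), IsUnip F u ∧ g = pElt F h A B D * wSwap F p q k h * u)
    {g : GL (Fin k) F} (hg : hatFun F h f g ≠ 0) :
    ∃ (A : GL (Fin q) F) (B : Matrix (Fin q) (Fin p) F) (D : GL (Fin p) F)
      (u : GL (Fin k) F), IsUnip F u ∧ g = pElt F h' A B D * wSwap F q p k h' * u := by
  obtain ⟨A, B, D, u, hu, hdec⟩ := hf _ fun h0 => hg (by rw [hatFun, h0, map_zero])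
  have hg' : g = revTransposeInv F (blockRevGL F h * (pElt F h A B D * wSwap F p q k h * u)) := by
    rw [← hdec, ← mul_assoc, blockRevGL_mul_blockRevGL, one_mul, revTransposeInv_revTransposeInv]
  rw [map_mul, map_mul, map_mul, revTransposeInv_blockRevGL h h', revTransposeInv_pElt h h',
    revTransposeInv_wSwap h h', blockRevGL, ← mul_assoc, ← mul_assoc, pElt_mul] at hg'
  exact ⟨_, _, _, _, isUnip_revTransposeInv hu, hg'⟩

lemma IsInducedWhittakerVector.hat {h : p + q = k} {f : GL (Fin k) F → P ⊗[ℂ] Q}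
    (hf : IsInducedWhittakerVector h ρ τ ψ ξρ ξτ f) (h' : q + p = k) :
    IsInducedWhittakerVector h' (τ.comp (glTransposeInv F)) (ρ.comp (glTransposeInv F)) ψ⁻¹
      (τ (revGL F q) ξτ) (ρ (revGL F p) ξρ) (hatFun F h f) := by
  obtain ⟨hind, hwh, hval, hsupp⟩ := hf
  refine ⟨hatFun_mem_indSpace h' hind, fun u hu g => hatFun_apply_mul h hwh hu g, ?_,
    fun g hg => exists_eq_of_hatFun_ne_zero h' hsupp hg⟩
  rw [hatFun, revTransposeInv_wSwap h' h, blockRevGL, hind, hval, TensorProduct.map_tmul,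
    TensorProduct.comm_tmul]

lemma Uop_hatFun (h : p + q = k) (h' : q + p = k) (f : GL (Fin k) F → P ⊗[ℂ] Q) :
    Uop h' (hatFun F h f) = hatFun F h' (Uop h f) := by
  funext x
  simp only [Uop, hatFun, map_sum, TensorProduct.comm_comm]
  refine Fintype.sum_equiv ((Matrix.transposeAddEquiv _ _ F).toEquiv.trans (Equiv.neg _)) _ _
    fun X => congrArg f ?_
  exact blockRevGL_mul_revTransposeInv_wSwap_mul_pElt h h' X x

lemma IsInducedWhittakerVector.comp_glCongr {h : p + q = k} {f : GL (Fin k) F → P ⊗[ℂ] Q}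
    (hf : IsInducedWhittakerVector h ρ τ ψ ξρ ξτ f) {k' : ℕ} (c : k = k') :
    IsInducedWhittakerVector (h.trans c) ρ τ ψ ξρ ξτ (f ∘ glCongr F c.symm) := by
  subst c
  simpa only [Function.comp_def, glCongr_self] using hf

lemma Uop_comp_glCongr (h : p + q = k) {k' : ℕ} (c : k = k') (f : GL (Fin k) F → P ⊗[ℂ] Q) :
    Uop (h.trans c) (f ∘ glCongr F c.symm) = Uop h f ∘ glCongr F c.symm := by
  subst c
  simp only [Function.comp_def, glCongr_self]

lemma IsShahidiGamma.comp_glTransposeInv {n m : ℕ} {V W : Type} [AddCommGroup V] [Module ℂ V]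
    [AddCommGroup W] [Module ℂ W] {π : Representation ℂ (GL (Fin n) F) V}
    {σ : Representation ℂ (GL (Fin m) F) W} {γ : ℂ} (h : IsShahidiGamma ψ π σ γ) :
    IsShahidiGamma ψ⁻¹ (σ.comp (glTransposeInv F)) (π.comp (glTransposeInv F)) γ := by
  obtain ⟨ξπ, ξσ, fσπ, fπσ, hξπ, hξσ, hwπ, hwσ, hfσπ, hfπσ, hU⟩ := h
  have hmn : m + n = n + m := add_comm m n
  refine ⟨σ (revGL F m) ξσ, π (revGL F n) ξπ, hatFun F rfl fσπ ∘ glCongr F hmn.symm,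
    hatFun F (add_comm n m) fπσ ∘ glCongr F hmn.symm,
    (map_ne_zero_iff _ representation_revGL_injective).mpr hξσ,
    (map_ne_zero_iff _ representation_revGL_injective).mpr hξπ,
    hwσ.comp_glTransposeInv, hwπ.comp_glTransposeInv,
    (hfσπ.hat (add_comm n m)).comp_glCongr hmn, (hfπσ.hat rfl).comp_glCongr hmn, fun g => ?_⟩
  calc Uop rfl (hatFun F rfl fσπ ∘ glCongr F hmn.symm) g
      = hatFun F (add_comm n m) (Uop rfl fσπ) (glCongr F hmn.symm g) := by
        rw [← Uop_hatFun]
        exact congrFun (Uop_comp_glCongr (add_comm n m) hmn _) g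
    _ = γ • hatFun F (add_comm n m) fπσ (glCongr F hmn.symm g) := by
        simp only [hatFun, hU, map_smul]

end InducedWhittaker

variable (F : Type) [Field F] [Fintype F] [DecidableEq F]

theorem statement5
    (ψ : AddChar F ℂ) {n m : ℕ}
    {V W : Type} [AddCommGroup V] [Module ℂ V] [AddCommGroup W] [Module ℂ W]
    (π : Representation ℂ (GL (Fin n) F) V) (σ : Representation ℂ (GL (Fin m) F) W)
    (hπ : WhittakerType π ψ) (hσ : WhittakerType σ ψ) :
    ∀ γ γ' : ℂ,
      IsShahidiGamma ψ π σ γ →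
      IsShahidiGamma ψ⁻¹ (σ.comp (glTransposeInv F)) (π.comp (glTransposeInv F)) γ' →
      γ = γ' := by
  intro γ γ' hγ hγ'
  exact hγ.comp_glTransposeInv.unique hσ.comp_glTransposeInv hπ.comp_glTransposeInv hγ'

end Statements
end GammaFF
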